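/- Let f : ℝ × (0, ∞) → ℝ be continuous and satisfy: (a) for every 0 < a < b there is L > 0 with |f(x, r₁) − f(x, r₂)| ≤ L|r₁ − r₂| for all x ∈ ℝ and r₁, r₂ ∈ [a, b]; (b) there exist δ > 0 and c > 0 with f(x, r) ≤ −c/(2r) for all x ∈ ℝ and 0 < r < δ; (c) there exists R₀ > δ with f(x, r) ≥ 1/2 for all x ∈ ℝ and r ≥ R₀; (d) there exists K > 0 with |f(x, r)| ≤ K for all x ∈ ℝ and r ≥ δ. For t ∈ ℝ let 𝓕⁺(t) denote the set of differentiable functions r : [t, ∞) → (0, ∞) with r′(x) = f(x, r(x)) for all x ≥ t and r(x) → +∞ as x → +∞. Then there exist constants 0 < m ≤ M and a differentiable function R⁺ : ℝ → ℝ with m ≤ R⁺(x) ≤ M and R⁺′(x) = f(x, R⁺(x)) for all x ∈ ℝ, such that for every t ∈ ℝ, R⁺(t) = inf { r(t) : r ∈ 𝓕⁺(t) }. -/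

import Mathlib

open Filter

/-- The family `𝓕⁺(t)` of positive solutions of `r' = f(x, r)` on `[t, ∞)`
escaping to `+∞` (outgoing characteristics reaching spatial infinity). -/
def escapingSolutions (f : ℝ → ℝ → ℝ) (t : ℝ) : Set (ℝ → ℝ) :=
  {r | (∀ x ∈ Set.Ici t, 0 < r x) ∧
       (∀ x ∈ Set.Ici t, HasDerivWithinAt r (f x (r x)) (Set.Ici t) x) ∧
       Tendsto r atTop atTop}

/-!
Let `a := δ / 2`. Truncating the field to `g x r := f x (max a r)` makes it bounded and locally
Lipschitz in `r`, so every solution of `r' = g(x, r)` is global. For the solution `ρₙ` with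
`ρₙ(n) = R₀`, the level `a` cannot be crossed upwards (`f < 0` there) and the level `R₀` cannot
be crossed downwards (`f ≥ 1/2` there); hence `a < ρₙ ≤ R₀` before time `n` and
`ρₙ(x) ≥ R₀ + (x - n)/2` after it. So `ρₙ` solves the original equation and escapes to infinity.
By uniqueness two solutions never cross, so `ρₙ` decreases in `n`; its limit `R⁺` is again a
solution (pass to the limit in the integral equation) with values in `[a, R₀]`. Finally an escaping
solution `r` from time `t` is `≥ R₀ = ρₙ(n)` at some large time `n`, hence `r ≥ ρₙ ≥ R⁺` on
`[t, n]`, so `R⁺(t)` is the infimum of the values `r(t)`.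
-/

open Set Metric Topology MeasureTheory
open scoped NNReal

section BoundedField

variable {E : Type*} [NormedAddCommGroup E] [NormedSpace ℝ E] {g : ℝ → E → E} {K : ℝ≥0}

theorem norm_sub_le_of_forall_hasDerivAt_ball {u : ℝ → E} {t₀ r : ℝ}
    (hbdd : ∀ x y, ‖g x y‖ ≤ K) (hu : ∀ x ∈ ball t₀ r, HasDerivAt u (g x (u x)) x)
    {x : ℝ} (hx : x ∈ ball t₀ r) : ‖u x - u t₀‖ ≤ K * r := by
  have hr : 0 < r := pos_of_mem_ball hx
  calc ‖u x - u t₀‖ ≤ K * ‖x - t₀‖ :=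
        (convex_ball t₀ r).norm_image_sub_le_of_norm_hasDerivWithin_le
          (fun y hy => (hu y hy).hasDerivWithinAt) (fun y _ => hbdd y _) (mem_ball_self hr) hx
    _ ≤ K * r := by gcongr; exact (mem_ball_iff_norm.mp hx).le

theorem ODE_solution_eqOn_ball_of_norm_le {u v : ℝ → E} {t₀ r : ℝ} (hbdd : ∀ x y, ‖g x y‖ ≤ K)
    (hlip : ∀ (y : E) (ρ : ℝ), ∃ L, ∀ x, LipschitzOnWith L (g x) (closedBall y ρ))
    (hu : ∀ x ∈ ball t₀ r, HasDerivAt u (g x (u x)) x)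
    (hv : ∀ x ∈ ball t₀ r, HasDerivAt v (g x (v x)) x) (huv : u t₀ = v t₀) :
    EqOn u v (ball t₀ r) := by
  intro x hx
  have hr : 0 < r := pos_of_mem_ball hx
  obtain ⟨L, hL⟩ := hlip (u t₀) (K * r)
  have hsol : ∀ w : ℝ → E, w t₀ = u t₀ → (∀ x ∈ ball t₀ r, HasDerivAt w (g x (w x)) x) →
      ∀ x ∈ Ioo (t₀ - r) (t₀ + r), HasDerivAt w (g x (w x)) x ∧ w x ∈ closedBall (u t₀) (K * r) :=
    fun w hw hw' x hx => by
      rw [← Real.ball_eq_Ioo] at hx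
      refine ⟨hw' x hx, ?_⟩
      rw [mem_closedBall_iff_norm, ← hw]
      exact norm_sub_le_of_forall_hasDerivAt_ball hbdd hw' hx
  rw [Real.ball_eq_Ioo] at hx
  exact ODE_solution_unique_of_mem_Ioo (fun t _ => hL t) (Real.ball_eq_Ioo t₀ r ▸ mem_ball_self hr)
    (hsol u rfl hu) (hsol v huv.symm hv) huv hx

theorem exists_ODE_solution_ball [CompleteSpace E]
    (hcont : ∀ y, Continuous (g · y)) (hbdd : ∀ x y, ‖g x y‖ ≤ K)
    (hlip : ∀ (y : E) (ρ : ℝ), ∃ L, ∀ x, LipschitzOnWith L (g x) (closedBall y ρ))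
    (t₀ : ℝ) (y₀ : E) (r : ℝ≥0) :
    ∃ u : ℝ → E, u t₀ = y₀ ∧ ∀ x ∈ ball t₀ r, HasDerivAt u (g x (u x)) x := by
  obtain ⟨L, hL⟩ := hlip y₀ (K * r)
  have ht₀ : t₀ ∈ Icc (t₀ - r) (t₀ + r) := ⟨by simp, by simp⟩
  have hpl : IsPicardLindelof g ⟨t₀, ht₀⟩ y₀ (K * r) 0 K L :=
    { lipschitzOnWith := fun t _ => by simpa using hL t
      continuousOn := fun y _ => (hcont y).continuousOn
      norm_le := fun t _ y _ => hbdd t y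
      mul_max_le := by simp }
  obtain ⟨u, hu₀, hu⟩ := hpl.exists_eq_forall_mem_Icc_hasDerivWithinAt₀
  refine ⟨u, hu₀, fun x hx => ?_⟩
  rw [Real.ball_eq_Ioo] at hx
  exact (hu x (Ioo_subset_Icc_self hx)).hasDerivAt (Icc_mem_nhds hx.1 hx.2)

theorem exists_ODE_solution_of_norm_le [CompleteSpace E]
    (hcont : ∀ y, Continuous (g · y)) (hbdd : ∀ x y, ‖g x y‖ ≤ K)
    (hlip : ∀ (y : E) (ρ : ℝ), ∃ L, ∀ x, LipschitzOnWith L (g x) (closedBall y ρ))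
    (t₀ : ℝ) (y₀ : E) : ∃ u : ℝ → E, u t₀ = y₀ ∧ ∀ x, HasDerivAt u (g x (u x)) x := by
  choose u hu₀ hu using fun n : ℕ => exists_ODE_solution_ball hcont hbdd hlip t₀ y₀ (n + 1)
  push_cast at hu
  have hagree : ∀ m n : ℕ, ∀ y, dist y t₀ < m + 1 → dist y t₀ < n + 1 → u m y = u n y := by
    intro m n y hm hn
    have hsub : ∀ k : ℕ, min m n ≤ k → ball t₀ (min m n + 1) ⊆ ball t₀ (k + 1) := fun k hk =>
      ball_subset_ball (by exact_mod_cast Nat.add_le_add_right hk 1)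
    refine ODE_solution_eqOn_ball_of_norm_le hbdd hlip
      (fun x hx => hu m x (hsub m (min_le_left _ _) hx))
      (fun x hx => hu n x (hsub n (min_le_right _ _) hx)) ((hu₀ m).trans (hu₀ n).symm) ?_
    rcases le_total m n with h | h <;> simpa [h]
  set N : ℝ → ℕ := fun x => ⌈dist x t₀⌉₊
  have hN : ∀ x, dist x t₀ < N x + 1 := fun x => (Nat.le_ceil _).trans_lt (lt_add_one _)
  refine ⟨fun x => u (N x) x, by simpa [N] using hu₀ 0, fun x => ?_⟩
  have heq : (fun y => u (N y) y) =ᶠ[𝓝 x] u (N x) := by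
    filter_upwards [isOpen_ball.mem_nhds (mem_ball.mpr (hN x))] with y hy
    exact hagree _ _ y (hN y) hy
  simpa [heq.eq_of_nhds] using (hu (N x) x (hN x)).congr_of_eventuallyEq heq

theorem ODE_solution_of_tendsto [CompleteSpace E] (hg : Continuous (Function.uncurry g))
    (hbdd : ∀ x y, ‖g x y‖ ≤ K) {u : ℕ → ℝ → E} {v : ℝ → E}
    (hu : ∀ n x, HasDerivAt (u n) (g x (u n x)) x)
    (hlim : ∀ x, Tendsto (fun n => u n x) atTop (𝓝 (v x))) (x : ℝ) :
    HasDerivAt v (g x (v x)) x := by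
  have hcomp : ∀ w : ℝ → E, Continuous w → Continuous fun y => g y (w y) :=
    fun w hw => hg.comp (continuous_id.prodMk hw)
  have hulip : ∀ n, LipschitzWith K (u n) := fun n =>
    lipschitzWith_of_nnnorm_deriv_le (fun y => (hu n y).differentiableAt) fun y => by
      rw [(hu n y).deriv, ← NNReal.coe_le_coe, coe_nnnorm]
      exact hbdd _ _
  have hvcont : Continuous v := (LipschitzWith.of_dist_le_mul fun y z =>
    le_of_tendsto' ((hlim y).dist (hlim z)) fun n => (hulip n).dist_le_mul y z).continuous
  have hucont : ∀ n, Continuous (u n) := fun n => (hulip n).continuous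
  have hint : ∀ n y, u n y = u n 0 + ∫ s in 0..y, g s (u n s) := fun n y => by
    rw [intervalIntegral.integral_eq_sub_of_hasDerivAt (fun s _ => hu n s)
      ((hcomp _ (hucont n)).intervalIntegrable 0 y), add_sub_cancel]
  have hvint : v = fun y => v 0 + ∫ s in 0..y, g s (v s) := by
    funext y
    refine tendsto_nhds_unique (hlim y) ?_
    simp_rw [hint _ y]
    refine (hlim 0).add (intervalIntegral.tendsto_integral_filter_of_dominated_convergence
      (fun _ => (K : ℝ)) (Eventually.of_forall fun n => (hcomp _ (hucont n)).aestronglyMeasurable)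
      (Eventually.of_forall fun n => ae_of_all _ fun s _ => hbdd _ _) intervalIntegrable_const
      (ae_of_all _ fun s _ => ?_))
    exact (hg.tendsto (s, v s)).comp (tendsto_const_nhds.prodMk_nhds (hlim s))
  have h := ((hcomp v hvcont).integral_hasStrictDerivAt 0 x).hasDerivAt.const_add (v 0)
  rwa [← hvint] at h

end BoundedField

section Barrier

variable {u u' : ℝ → ℝ} {s x : ℝ}

theorem le_of_le_of_deriv_neg_at_eq {θ : ℝ} (hu : ∀ x, HasDerivAt u (u' x) x)
    (hθ : ∀ x, u x = θ → u' x < 0) (hs : u s ≤ θ) (hsx : s ≤ x) : u x ≤ θ :=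
  image_le_of_deriv_right_lt_deriv_boundary (fun y _ => (hu y).continuousAt.continuousWithinAt)
    (fun y _ => (hu y).hasDerivWithinAt) hs (fun _ => hasDerivAt_const _ θ)
    (fun y _ hy => hθ y hy) ⟨hsx, le_rfl⟩

theorem add_mul_sub_le_of_le_of_deriv_ge {b μ : ℝ} (hu : ∀ x, HasDerivAt u (u' x) x) (hμ : 0 < μ)
    (hder : ∀ x, b ≤ u x → μ ≤ u' x) (hs : b ≤ u s) (hsx : s ≤ x) : u s + μ * (x - s) ≤ u x := by
  have habove : ∀ y, s ≤ y → b ≤ u y := fun y hy =>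
    neg_le_neg_iff.mp <| le_of_le_of_deriv_neg_at_eq (u := (- u ·)) (fun y => (hu y).neg)
      (fun y hy => by linarith [hder y (neg_inj.mp hy).ge]) (neg_le_neg hs) hy
  refine image_le_of_deriv_right_le_deriv_boundary (f := fun y => u s + μ * (y - s))
    (f' := fun _ => μ) (by fun_prop) (fun y _ => ?_) (by simp)
    (fun y _ => (hu y).continuousAt.continuousWithinAt)
    (fun y _ => (hu y).hasDerivWithinAt) (fun y hy => hder y (habove y hy.1)) ⟨hsx, le_rfl⟩
  simpa using ((((hasDerivAt_id y).sub_const s).const_mul μ).const_add (u s)).hasDerivWithinAt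

end Barrier

section Comparison

variable {f : ℝ → ℝ → ℝ} {u v : ℝ → ℝ} {p q : ℝ}

theorem exists_pos_mapsTo_Icc_of_continuousOn (hpq : p ≤ q) (hu : ContinuousOn u (Icc p q))
    (hpos : ∀ x ∈ Icc p q, 0 < u x) : ∃ lo hi, 0 < lo ∧ MapsTo u (Icc p q) (Icc lo hi) := by
  obtain ⟨xm, hxm, hmin⟩ := isCompact_Icc.exists_isMinOn (nonempty_Icc.2 hpq) hu
  obtain ⟨xM, -, hmax⟩ := isCompact_Icc.exists_isMaxOn (nonempty_Icc.2 hpq) hu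
  exact ⟨u xm, u xM, hpos xm hxm, fun x hx => ⟨hmin hx, hmax hx⟩⟩

theorem ODE_solution_eqOn_Icc_of_pos
    (hlip : ∀ lo hi, 0 < lo → ∃ L, ∀ x, LipschitzOnWith L (f x) (Icc lo hi))
    (hu : ∀ x ∈ Icc p q, HasDerivWithinAt u (f x (u x)) (Icc p q) x)
    (hv : ∀ x ∈ Icc p q, HasDerivWithinAt v (f x (v x)) (Icc p q) x)
    (hupos : ∀ x ∈ Icc p q, 0 < u x) (hvpos : ∀ x ∈ Icc p q, 0 < v x)
    {w : ℝ} (hw : w ∈ Icc p q) (huv : u w = v w) : EqOn u v (Icc p q) := by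
  have hcont : ∀ z : ℝ → ℝ, (∀ x ∈ Icc p q, HasDerivWithinAt z (f x (z x)) (Icc p q) x) →
      ContinuousOn z (Icc p q) := fun z hz x hx => (hz x hx).continuousWithinAt
  obtain ⟨lo₁, hi₁, hlo₁, hu₁⟩ :=
    exists_pos_mapsTo_Icc_of_continuousOn (hw.1.trans hw.2) (hcont u hu) hupos
  obtain ⟨lo₂, hi₂, hlo₂, hv₂⟩ :=
    exists_pos_mapsTo_Icc_of_continuousOn (hw.1.trans hw.2) (hcont v hv) hvpos
  obtain ⟨L, hL⟩ := hlip (min lo₁ lo₂) (max hi₁ hi₂) (lt_min hlo₁ hlo₂)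
  have hsub₁ : Icc lo₁ hi₁ ⊆ Icc (min lo₁ lo₂) (max hi₁ hi₂) :=
    Icc_subset_Icc (min_le_left _ _) (le_max_left _ _)
  have hsub₂ : Icc lo₂ hi₂ ⊆ Icc (min lo₁ lo₂) (max hi₁ hi₂) :=
    Icc_subset_Icc (min_le_right _ _) (le_max_right _ _)
  rw [← Icc_union_Icc_eq_Icc hw.1 hw.2]
  refine EqOn.union ?_ ?_
  · have hsub : Icc p w ⊆ Icc p q := Icc_subset_Icc_right hw.2
    have hder : ∀ z : ℝ → ℝ, (∀ x ∈ Icc p q, HasDerivWithinAt z (f x (z x)) (Icc p q) x) →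
        ∀ x ∈ Ioc p w, HasDerivWithinAt z (f x (z x)) (Iic x) x := fun z hz x hx =>
      (hz x (hsub (Ioc_subset_Icc_self hx))).mono_of_mem_nhdsWithin
        (Icc_mem_nhdsLE_of_mem ⟨hx.1, hx.2.trans hw.2⟩)
    exact ODE_solution_unique_of_mem_Icc_left (fun t _ => hL t) ((hcont u hu).mono hsub)
      (hder u hu) (fun x hx => hsub₁ (hu₁ (hsub (Ioc_subset_Icc_self hx))))
      ((hcont v hv).mono hsub) (hder v hv)
      (fun x hx => hsub₂ (hv₂ (hsub (Ioc_subset_Icc_self hx)))) huv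
  · have hsub : Icc w q ⊆ Icc p q := Icc_subset_Icc_left hw.1
    have hder : ∀ z : ℝ → ℝ, (∀ x ∈ Icc p q, HasDerivWithinAt z (f x (z x)) (Icc p q) x) →
        ∀ x ∈ Ico w q, HasDerivWithinAt z (f x (z x)) (Ici x) x := fun z hz x hx =>
      (hz x (hsub (Ico_subset_Icc_self hx))).mono_of_mem_nhdsWithin
        (Icc_mem_nhdsGE_of_mem ⟨hw.1.trans hx.1, hx.2⟩)
    exact ODE_solution_unique_of_mem_Icc_right (fun t _ => hL t) ((hcont u hu).mono hsub)
      (hder u hu) (fun x hx => hsub₁ (hu₁ (hsub (Ico_subset_Icc_self hx))))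
      ((hcont v hv).mono hsub) (hder v hv)
      (fun x hx => hsub₂ (hv₂ (hsub (Ico_subset_Icc_self hx)))) huv

theorem ODE_solution_le_of_le_of_mem_Icc
    (hlip : ∀ lo hi, 0 < lo → ∃ L, ∀ x, LipschitzOnWith L (f x) (Icc lo hi))
    (hu : ∀ x ∈ Icc p q, HasDerivWithinAt u (f x (u x)) (Icc p q) x)
    (hv : ∀ x ∈ Icc p q, HasDerivWithinAt v (f x (v x)) (Icc p q) x)
    (hupos : ∀ x ∈ Icc p q, 0 < u x) (hvpos : ∀ x ∈ Icc p q, 0 < v x)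
    {x y : ℝ} (hx : x ∈ Icc p q) (hy : y ∈ Icc p q) (hxy : u x ≤ v x) : u y ≤ v y := by
  by_contra! hlt
  have hsub : uIcc x y ⊆ Icc p q := uIcc_subset_Icc hx hy
  have hcont : ContinuousOn (fun z => u z - v z) (uIcc x y) := fun z hz =>
    ((hu z (hsub hz)).continuousWithinAt.sub (hv z (hsub hz)).continuousWithinAt).mono hsub
  obtain ⟨w, hw, hw0⟩ := intermediate_value_uIcc hcont
    (mem_uIcc.mpr (Or.inl ⟨sub_nonpos.mpr hxy, sub_nonneg.mpr hlt.le⟩) : (0 : ℝ) ∈ _)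
  have := ODE_solution_eqOn_Icc_of_pos hlip hu hv hupos hvpos (hsub hw) (sub_eq_zero.mp hw0) hy
  linarith

theorem ODE_solution_le_of_le
    (hlip : ∀ lo hi, 0 < lo → ∃ L, ∀ x, LipschitzOnWith L (f x) (Icc lo hi))
    (hu : ∀ x, HasDerivAt u (f x (u x)) x) (hv : ∀ x, HasDerivAt v (f x (v x)) x)
    (hupos : ∀ x, 0 < u x) (hvpos : ∀ x, 0 < v x) {s : ℝ} (hs : u s ≤ v s) (x : ℝ) :
    u x ≤ v x :=
  ODE_solution_le_of_le_of_mem_Icc hlip (fun y _ => (hu y).hasDerivWithinAt)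
    (fun y _ => (hv y).hasDerivWithinAt)
    (fun y _ => hupos y) (fun y _ => hvpos y) ⟨min_le_left s x, le_max_left s x⟩
    ⟨min_le_right s x, le_max_right s x⟩ hs

end Comparison

section Horizon

variable {f : ℝ → ℝ → ℝ} {a b μ K : ℝ}

theorem continuous_uncurry_max (hf : ContinuousOn (fun p : ℝ × ℝ => f p.1 p.2) (univ ×ˢ Ioi 0))
    (ha : 0 < a) : Continuous (Function.uncurry fun x r => f x (max a r)) :=
  hf.comp_continuous (f := fun p : ℝ × ℝ => (p.1, max a p.2)) (by fun_prop)
    fun _ => ⟨trivial, ha.trans_le (le_max_left _ _)⟩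

theorem exists_lipschitzOnWith_max
    (hlip : ∀ lo hi, 0 < lo → ∃ L, ∀ x, LipschitzOnWith L (f x) (Icc lo hi)) (ha : 0 < a)
    (y ρ : ℝ) : ∃ L, ∀ x, LipschitzOnWith L (fun r => f x (max a r)) (closedBall y ρ) := by
  obtain ⟨L, hL⟩ := hlip a (max a (y + ρ)) ha
  refine ⟨L * 1, fun x => (hL x).comp (LipschitzWith.id.const_max a).lipschitzOnWith ?_⟩
  intro r hr
  exact ⟨le_max_left _ _, max_le_max le_rfl (by linarith [(abs_le.mp (mem_closedBall.mp hr)).2])⟩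

theorem exists_escaping_solution_eq_at (hf : ContinuousOn (fun p : ℝ × ℝ => f p.1 p.2) (univ ×ˢ Ioi 0))
    (hlip : ∀ lo hi, 0 < lo → ∃ L, ∀ x, LipschitzOnWith L (f x) (Icc lo hi))
    (ha : 0 < a) (hab : a < b) (hμ : 0 < μ) (hneg : ∀ x, f x a < 0)
    (hgrow : ∀ x r, b ≤ r → μ ≤ f x r) (hK : ∀ x r, a ≤ r → |f x r| ≤ K) (T : ℝ) :
    ∃ ρ : ℝ → ℝ, ρ T = b ∧ (∀ x, HasDerivAt ρ (f x (ρ x)) x) ∧ (∀ x, a < ρ x) ∧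
      (∀ x ≤ T, ρ x ≤ b) ∧ ∀ x, T ≤ x → b + μ * (x - T) ≤ ρ x := by
  obtain ⟨u, huT, hu⟩ := exists_ODE_solution_of_norm_le (g := fun x r => f x (max a r))
    (fun r => (continuous_uncurry_max hf ha).comp (continuous_id.prodMk continuous_const))
    (fun x r => (Real.norm_eq_abs _).trans_le <|
      (hK x _ (le_max_left a r)).trans (Real.le_coe_toNNReal K))
    (exists_lipschitzOnWith_max hlip ha) T b
  have hescape : ∀ s x, b ≤ u s → s ≤ x → u s + μ * (x - s) ≤ u x := fun s x hs hsx =>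
    add_mul_sub_le_of_le_of_deriv_ge hu hμ
      (fun y hy => by simpa only [max_eq_right (hab.le.trans hy)] using hgrow y _ hy) hs hsx
  have hgt : ∀ x, a < u x := by
    intro x
    by_contra! hx
    rcases le_total x T with hxT | hTx
    · have := le_of_le_of_deriv_neg_at_eq hu
        (fun y hy => by simpa only [hy, max_self] using hneg y) hx hxT
      linarith
    · nlinarith [hescape T x huT.ge hTx]
  have hle : ∀ x ≤ T, u x ≤ b := by
    intro x hxT
    by_contra! hx
    nlinarith [hescape x T hx.le hxT]
  refine ⟨u, huT, fun x => ?_, hgt, hle, fun x hx => by simpa [huT] using hescape T x huT.ge hx⟩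
  simpa only [max_eq_right (hgt x).le] using hu x

theorem mem_escapingSolutions {ρ : ℝ → ℝ} (hpos : ∀ x, 0 < ρ x)
    (hρ : ∀ x, HasDerivAt ρ (f x (ρ x)) x) (htop : Tendsto ρ atTop atTop) (t : ℝ) :
    ρ ∈ escapingSolutions f t :=
  ⟨fun x _ => hpos x, fun x _ => (hρ x).hasDerivWithinAt, htop⟩

theorem le_of_mem_escapingSolutions
    (hlip : ∀ lo hi, 0 < lo → ∃ L, ∀ x, LipschitzOnWith L (f x) (Icc lo hi))
    {ρ r : ℝ → ℝ} {t T : ℝ} (hρ : ∀ x, HasDerivAt ρ (f x (ρ x)) x) (hpos : ∀ x, 0 < ρ x)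
    (hr : r ∈ escapingSolutions f t) (htT : t ≤ T) (hT : ρ T ≤ r T) : ρ t ≤ r t :=
  ODE_solution_le_of_le_of_mem_Icc hlip (fun x _ => (hρ x).hasDerivWithinAt)
    (fun x hx => (hr.2.1 x hx.1).mono Icc_subset_Ici_self) (fun x _ => hpos x)
    (fun x hx => hr.1 x hx.1) ⟨htT, le_rfl⟩ ⟨le_rfl, htT⟩ hT

theorem exists_horizon (hf : ContinuousOn (fun p : ℝ × ℝ => f p.1 p.2) (univ ×ˢ Ioi 0))
    (hlip : ∀ lo hi, 0 < lo → ∃ L, ∀ x, LipschitzOnWith L (f x) (Icc lo hi))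
    (ha : 0 < a) (hab : a < b) (hμ : 0 < μ) (hneg : ∀ x, f x a < 0)
    (hgrow : ∀ x r, b ≤ r → μ ≤ f x r) (hK : ∀ x r, a ≤ r → |f x r| ≤ K) :
    ∃ R : ℝ → ℝ, (∀ x, a ≤ R x ∧ R x ≤ b) ∧ (∀ x, HasDerivAt R (f x (R x)) x) ∧
      ∀ t, R t = sInf ((fun r : ℝ → ℝ => r t) '' escapingSolutions f t) := by
  choose ρ hρb hρd hρa hρle hρge using
    fun n : ℕ => exists_escaping_solution_eq_at hf hlip ha hab hμ hneg hgrow hK n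
  have hρpos : ∀ n x, 0 < ρ n x := fun n x => ha.trans (hρa n x)
  have hanti : ∀ t, Antitone fun n => ρ n t := fun t m n hmn => by
    have hmn' : (m : ℝ) ≤ n := Nat.cast_le.mpr hmn
    refine ODE_solution_le_of_le hlip (hρd n) (hρd m) (hρpos n) (hρpos m) (s := n) ?_ t
    nlinarith [hρb n, hρge m n hmn']
  have hbdd : ∀ t, BddBelow (range fun n => ρ n t) :=
    fun t => ⟨a, by rintro _ ⟨n, rfl⟩; exact (hρa n t).le⟩
  set R : ℝ → ℝ := fun t => ⨅ n : ℕ, ρ n t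
  have hRa : ∀ t, a ≤ R t := fun t => le_ciInf fun n => (hρa n t).le
  have hRle : ∀ t n, R t ≤ ρ n t := fun t n => ciInf_le (hbdd t) n
  have hRd : ∀ x, HasDerivAt R (f x (R x)) x := fun x => by
    simpa only [max_eq_right (hRa x)] using
      ODE_solution_of_tendsto (g := fun x r => f x (max a r)) (K := K.toNNReal) (v := R)
        (continuous_uncurry_max hf ha)
        (fun x r => (Real.norm_eq_abs _).trans_le <|
          (hK x _ (le_max_left a r)).trans (Real.le_coe_toNNReal K))
        (fun n y => by simpa only [max_eq_right (hρa n y).le] using hρd n y)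
        (fun t => tendsto_atTop_ciInf (hanti t) (hbdd t)) x
  refine ⟨R, fun x => ⟨hRa x, (hRle x ⌈x⌉₊).trans (hρle _ x (Nat.le_ceil x))⟩, hRd, fun t => ?_⟩
  have hmem : ∀ n : ℕ, ρ n ∈ escapingSolutions f t := fun n =>
    mem_escapingSolutions (hρpos n) (hρd n) (tendsto_atTop_mono' _
      (eventually_ge_atTop (n : ℝ) |>.mono fun x hx => hρge n x hx)
      (tendsto_atTop_add_const_left _ _
        ((tendsto_atTop_add_const_right _ _ tendsto_id).const_mul_atTop hμ))) t
  have hglb : IsGLB ((fun r : ℝ → ℝ => r t) '' escapingSolutions f t) (R t) := by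
    refine ⟨?_, fun l hl => le_ciInf fun n => hl ⟨ρ n, hmem n, rfl⟩⟩
    rintro _ ⟨r, hr, rfl⟩
    obtain ⟨n, hrn, htn⟩ := ((hr.2.2.comp tendsto_natCast_atTop_atTop).eventually_ge_atTop b).and
      (eventually_ge_atTop ⌈t⌉₊) |>.exists
    exact (hRle t n).trans <| le_of_mem_escapingSolutions hlip (hρd n) (hρpos n) hr
      (Nat.ceil_le.mp htn) (by simpa [hρb n] using hrn)
  exact (hglb.csInf_eq ⟨_, ρ 0, hmem 0, rfl⟩).symm

end Horizon

theorem exists_lipschitzOnWith_Icc_of_abs_sub_le {f : ℝ → ℝ → ℝ}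
    (hlip : ∀ a b : ℝ, 0 < a → a < b → ∃ L > 0, ∀ x : ℝ,
      ∀ r₁ ∈ Icc a b, ∀ r₂ ∈ Icc a b, |f x r₁ - f x r₂| ≤ L * |r₁ - r₂|) :
    ∀ lo hi, 0 < lo → ∃ L, ∀ x, LipschitzOnWith L (f x) (Icc lo hi) := by
  intro lo hi hlo
  have hsub : Icc lo hi ⊆ Icc lo (max hi lo + 1) :=
    Icc_subset_Icc_right (by linarith [le_max_left hi lo])
  obtain ⟨L, hL, hLip⟩ := hlip lo (max hi lo + 1) hlo (by linarith [le_max_right hi lo])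
  refine ⟨L.toNNReal, fun x => LipschitzOnWith.of_dist_le_mul fun r₁ h₁ r₂ h₂ => ?_⟩
  rw [Real.dist_eq, Real.dist_eq, Real.coe_toNNReal _ hL.le]
  exact hLip x r₁ (hsub h₁) r₂ (hsub h₂)

theorem outer_black_hole_horizon_exists (f : ℝ → ℝ → ℝ)
    (hf : ContinuousOn (fun p : ℝ × ℝ => f p.1 p.2) (Set.univ ×ˢ Set.Ioi 0))
    (hlip : ∀ a b : ℝ, 0 < a → a < b → ∃ L > 0, ∀ x : ℝ,
      ∀ r₁ ∈ Set.Icc a b, ∀ r₂ ∈ Set.Icc a b, |f x r₁ - f x r₂| ≤ L * |r₁ - r₂|)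
    (δ c R₀ K : ℝ) (hδ : 0 < δ) (hc : 0 < c)
    (hsmall : ∀ x r : ℝ, 0 < r → r < δ → f x r ≤ -c / (2 * r))
    (hR₀ : δ < R₀) (hlarge : ∀ x r : ℝ, R₀ ≤ r → (1 : ℝ) / 2 ≤ f x r)
    (hbdd : ∀ x r : ℝ, δ ≤ r → |f x r| ≤ K) :
    ∃ m M : ℝ, 0 < m ∧ m ≤ M ∧
      ∃ R : ℝ → ℝ,
        (∀ x, m ≤ R x ∧ R x ≤ M) ∧
        (∀ x, HasDerivAt R (f x (R x)) x) ∧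
        ∀ t : ℝ, R t = sInf ((fun r : ℝ → ℝ => r t) '' escapingSolutions f t) := by
  have hneg : ∀ x, f x (δ / 2) < 0 := fun x => by
    have := hsmall x (δ / 2) (by positivity) (by linarith)
    have : -c / (2 * (δ / 2)) < 0 := div_neg_of_neg_of_pos (by linarith) (by positivity)
    linarith
  obtain ⟨L, hL, hLip⟩ := hlip (δ / 2) δ (by positivity) (by linarith)
  have hbdd' : ∀ x r, δ / 2 ≤ r → |f x r| ≤ K + L * δ := by
    intro x r hr
    rcases le_total δ r with hδr | hrδ
    · nlinarith [hbdd x r hδr]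
    · have h₁ := hLip x r ⟨hr, hrδ⟩ δ ⟨by linarith, le_rfl⟩
      have h₂ : |r - δ| ≤ δ := abs_le.mpr ⟨by linarith, by linarith⟩
      nlinarith [hbdd x δ le_rfl, abs_sub_abs_le_abs_sub (f x r) (f x δ)]
  obtain ⟨R, hR, hRd, hRinf⟩ := exists_horizon hf (exists_lipschitzOnWith_Icc_of_abs_sub_le hlip)
    (by positivity) (by linarith) (by norm_num) hneg hlarge hbdd'
  exact ⟨δ / 2, R₀, by positivity, by linarith, R, hR, hRd, hRinf⟩
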